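/- Let c > 1 and 0 < a ≤ b. There exist constants C > 0 and γ₀ > 0 such that for all 0 < γ < γ₀ and all z̃ ∈ [a, b]: | ψ₁(γ z̃) − c·ψ₁(γ(1 + z̃)) − γ^{−2}·(1/z̃² − c/(1 + z̃)²) − (1 − c)·π²/6 | ≤ C·γ. -/

import Mathlib

/-- The digamma function `ψ(x) = (d/dx) log Γ(x)`. -/
noncomputable def digamma (x : ℝ) : ℝ := deriv (fun y => Real.log (Real.Gamma y)) x

/-- The trigamma function `ψ₁ = ψ'`. -/
noncomputable def trigamma : ℝ → ℝ := deriv digamma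

/-!
The recurrence `ψ₁(x) = x⁻² + ψ₁(x + 1)` turns the left-hand side into
`(ψ₁(γz̃ + 1) - ψ₁(1)) - c·(ψ₁(γ(1 + z̃) + 1) - ψ₁(1))`, which is `O(γ)` uniformly in `z̃` because
`ψ₁` is differentiable at `1`. The value `ψ₁(1) = π²/6` comes from differentiating the logarithms
of the reflection and duplication formulas for `Γ` twice: they give `2ψ₁(1/2) = π²` and
`ψ₁(1/2) + ψ₁(1) = 4ψ₁(1)`.
-/

open Real Filter Set Topology

lemma forall_ne_neg_natCast_of_pos {x : ℝ} (hx : 0 < x) : ∀ m : ℕ, x ≠ -m := fun m h => by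
  linarith [(Nat.cast_nonneg m : (0 : ℝ) ≤ m)]

lemma analyticAt_Gamma_of_pos {x : ℝ} (hx : 0 < x) : AnalyticAt ℝ Gamma x := by
  have hC : AnalyticAt ℂ Complex.Gamma x := by
    refine DifferentiableOn.analyticAt (s := {s : ℂ | 0 < s.re}) (fun s hs => ?_)
      ((isOpen_lt continuous_const Complex.continuous_re).mem_nhds (by simpa using hx))
    refine (Complex.differentiableAt_Gamma s fun m hm => ?_).differentiableWithinAt
    simp only [hm, mem_ofPred_eq, Complex.neg_re, Complex.natCast_re] at hs
    linarith [(Nat.cast_nonneg m : (0 : ℝ) ≤ m)]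
  have hR : AnalyticAt ℝ (fun t : ℝ => (Complex.Gamma t).re) x :=
    Complex.reCLM.analyticAt _ |>.comp (hC.restrictScalars.comp (Complex.ofRealCLM.analyticAt x))
  simpa only [Complex.Gamma_ofReal, Complex.ofReal_re] using hR

lemma hasDerivAt_log_Gamma {x : ℝ} (hx : 0 < x) :
    HasDerivAt (fun y => log (Gamma y)) (digamma x) x :=
  ((differentiableAt_Gamma (forall_ne_neg_natCast_of_pos hx)).log
    (Gamma_pos_of_pos hx).ne').hasDerivAt

lemma analyticAt_digamma {x : ℝ} (hx : 0 < x) : AnalyticAt ℝ digamma x := by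
  have hA : AnalyticOnNhd ℝ Gamma (Ioi 0) := fun y hy => analyticAt_Gamma_of_pos hy
  refine ((hA.deriv x hx).div (hA x hx) (Gamma_pos_of_pos hx).ne').congr ?_
  filter_upwards [eventually_gt_nhds hx] with y hy
  exact (((differentiableAt_Gamma (forall_ne_neg_natCast_of_pos hy)).hasDerivAt).log
    (Gamma_pos_of_pos hy).ne').deriv.symm

lemma analyticAt_trigamma {x : ℝ} (hx : 0 < x) : AnalyticAt ℝ trigamma x :=
  AnalyticOnNhd.deriv (s := Ioi 0) (fun _ hy => analyticAt_digamma hy) x hx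

lemma hasDerivAt_digamma {x : ℝ} (hx : 0 < x) : HasDerivAt digamma (trigamma x) x :=
  (analyticAt_digamma hx).differentiableAt.hasDerivAt

lemma digamma_add_one {x : ℝ} (hx : 0 < x) : digamma (x + 1) = digamma x + x⁻¹ := by
  have heq : (fun y => log (Gamma (y + 1))) =ᶠ[𝓝 x] fun y => log (Gamma y) + log y := by
    filter_upwards [eventually_gt_nhds hx] with y hy
    rw [Gamma_add_one hy.ne', log_mul hy.ne' (Gamma_pos_of_pos hy).ne', add_comm]
  exact ((hasDerivAt_log_Gamma (by linarith)).comp_add_const x 1).unique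
    (((hasDerivAt_log_Gamma hx).add (hasDerivAt_log hx.ne')).congr_of_eventuallyEq heq)

lemma trigamma_add_one {x : ℝ} (hx : 0 < x) : trigamma (x + 1) = trigamma x - (x ^ 2)⁻¹ := by
  have heq : (fun y => digamma (y + 1)) =ᶠ[𝓝 x] fun y => digamma y + y⁻¹ := by
    filter_upwards [eventually_gt_nhds hx] with y hy using digamma_add_one hy
  exact ((hasDerivAt_digamma (by linarith)).comp_add_const x 1).unique
    (((hasDerivAt_digamma hx).add (hasDerivAt_inv hx.ne')).congr_of_eventuallyEq heq)

lemma digamma_add_digamma_add_half {x : ℝ} (hx : 0 < x) :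
    digamma x + digamma (x + 1 / 2) = 2 * digamma (2 * x) - 2 * log 2 := by
  have heq : (fun y => log (Gamma y) + log (Gamma (y + 1 / 2))) =ᶠ[𝓝 x]
      fun y => log (Gamma (2 * y)) + (1 - 2 * y) * log 2 + log (√π) := by
    filter_upwards [eventually_gt_nhds hx] with y hy
    have h := congrArg log (Gamma_mul_Gamma_add_half y)
    rwa [log_mul (Gamma_pos_of_pos hy).ne' (Gamma_pos_of_pos (by linarith)).ne',
      log_mul (by positivity) (sqrt_pos.mpr pi_pos).ne',
      log_mul (Gamma_pos_of_pos (by linarith)).ne' (by positivity), log_rpow two_pos] at h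
  have hL := (hasDerivAt_log_Gamma hx).add
    ((hasDerivAt_log_Gamma (by linarith : 0 < x + 1 / 2)).comp_add_const x (1 / 2))
  have hR := ((((hasDerivAt_log_Gamma (by linarith : 0 < 2 * x)).comp x
    ((hasDerivAt_id x).const_mul 2)).add
    ((((hasDerivAt_id x).const_mul 2).const_sub 1).mul_const (log 2))).add_const (log √π))
  have := hL.unique (hR.congr_of_eventuallyEq heq)
  simp only [mul_one] at this
  linarith

lemma trigamma_add_trigamma_add_half {x : ℝ} (hx : 0 < x) :
    trigamma x + trigamma (x + 1 / 2) = 4 * trigamma (2 * x) := by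
  have heq : (fun y => digamma y + digamma (y + 1 / 2)) =ᶠ[𝓝 x]
      fun y => 2 * digamma (2 * y) - 2 * log 2 := by
    filter_upwards [eventually_gt_nhds hx] with y hy using digamma_add_digamma_add_half hy
  have hL := (hasDerivAt_digamma hx).add
    ((hasDerivAt_digamma (by linarith : 0 < x + 1 / 2)).comp_add_const x (1 / 2))
  have hR := (((hasDerivAt_digamma (by linarith : 0 < 2 * x)).comp x
    ((hasDerivAt_id x).const_mul 2)).const_mul 2).sub_const (2 * log 2)
  have := hL.unique (hR.congr_of_eventuallyEq heq)
  simp only [mul_one] at this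
  linarith

lemma digamma_sub_digamma_one_sub {x : ℝ} (hx₀ : 0 < x) (hx₁ : x < 1) :
    digamma x - digamma (1 - x) = -(π * cos (π * x)) / sin (π * x) := by
  have hsin : ∀ y ∈ Ioo (0 : ℝ) 1, 0 < sin (π * y) := fun y hy =>
    sin_pos_of_pos_of_lt_pi (mul_pos pi_pos hy.1) (by nlinarith [pi_pos, hy.2])
  have heq : (fun y => log (Gamma y) + log (Gamma (1 - y))) =ᶠ[𝓝 x]
      fun y => log π - log (sin (π * y)) := by
    filter_upwards [Ioo_mem_nhds hx₀ hx₁] with y hy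
    have h := congrArg log (Gamma_mul_Gamma_one_sub y)
    rwa [log_mul (Gamma_pos_of_pos hy.1).ne' (Gamma_pos_of_pos (by linarith [hy.2])).ne',
      log_div pi_pos.ne' (hsin y hy).ne'] at h
  have hL := (hasDerivAt_log_Gamma hx₀).add
    ((hasDerivAt_log_Gamma (by linarith : 0 < 1 - x)).comp x ((hasDerivAt_id x).const_sub 1))
  have hR := ((((hasDerivAt_id x).const_mul π).sin).log (hsin x ⟨hx₀, hx₁⟩).ne').const_sub (log π)
  have := hL.unique (hR.congr_of_eventuallyEq heq)
  simp only [id, mul_one] at this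
  linear_combination this

lemma trigamma_add_trigamma_one_sub {x : ℝ} (hx₀ : 0 < x) (hx₁ : x < 1) :
    trigamma x + trigamma (1 - x) = π ^ 2 / sin (π * x) ^ 2 := by
  have heq : (fun y => digamma y - digamma (1 - y)) =ᶠ[𝓝 x]
      fun y => -(π * cos (π * y)) / sin (π * y) := by
    filter_upwards [Ioo_mem_nhds hx₀ hx₁] with y hy using digamma_sub_digamma_one_sub hy.1 hy.2
  have hsin : sin (π * x) ≠ 0 :=
    (sin_pos_of_pos_of_lt_pi (mul_pos pi_pos hx₀) (by nlinarith [pi_pos])).ne'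
  have hL := (hasDerivAt_digamma hx₀).sub
    ((hasDerivAt_digamma (by linarith : 0 < 1 - x)).comp x ((hasDerivAt_id x).const_sub 1))
  have hπx := (hasDerivAt_id x).const_mul π
  have hR := ((hπx.cos.const_mul π).neg).div hπx.sin hsin
  have := hL.unique (hR.congr_of_eventuallyEq heq)
  simp only [id, mul_one, Pi.neg_apply] at this
  rw [eq_div_iff (pow_ne_zero 2 hsin)] at this ⊢
  linear_combination this + π ^ 2 * sin_sq_add_cos_sq (π * x)

lemma trigamma_one : trigamma 1 = π ^ 2 / 6 := by
  have hhalf := trigamma_add_trigamma_one_sub (x := 1 / 2) (by norm_num) (by norm_num)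
  have hdup := trigamma_add_trigamma_add_half (x := 1 / 2) (by norm_num)
  rw [show π * (1 / 2) = π / 2 by ring, sin_pi_div_two] at hhalf
  norm_num at hhalf hdup
  linarith

lemma exists_abs_trigamma_add_one_sub_le :
    ∃ K > (0 : ℝ), ∃ δ > (0 : ℝ), ∀ t, 0 < t → t < δ → |trigamma (t + 1) - π ^ 2 / 6| ≤ K * t := by
  obtain ⟨K, hK, hO⟩ := (analyticAt_trigamma one_pos).differentiableAt.isBigO_sub.exists_pos
  obtain ⟨δ, hδ, hball⟩ := Metric.eventually_nhds_iff.mp hO.bound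
  refine ⟨K, hK, δ, hδ, fun t ht htδ => ?_⟩
  have h := @hball (t + 1) (by simpa [Real.dist_eq, abs_of_pos ht])
  simpa [trigamma_one, abs_of_pos ht] using h

theorem trigamma_small_gamma_expansion_general (c a b : ℝ) (ha : 0 < a) :
    ∃ C > (0 : ℝ), ∃ γ₀ > (0 : ℝ), ∀ γ : ℝ, 0 < γ → γ < γ₀ →
      ∀ z ∈ Set.Icc a b,
        |trigamma (γ * z) - c * trigamma (γ * (1 + z))
            - (1 / γ ^ 2) * (1 / z ^ 2 - c / (1 + z) ^ 2)
            - (1 - c) * Real.pi ^ 2 / 6| ≤ C * γ := by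
  obtain ⟨K, hK, δ, hδ, hbound⟩ := exists_abs_trigamma_add_one_sub_le
  refine ⟨K * (1 + |c|) * (1 + |b|), by positivity, δ / (1 + |b|), by positivity, ?_⟩
  rintro γ hγ hγδ z ⟨haz, hzb⟩
  have hz : 0 < z := ha.trans_le haz
  have hz_le_abs : z ≤ |b| := hzb.trans (le_abs_self b)
  have hsmall : γ * (1 + z) < δ := calc
    γ * (1 + z) ≤ γ * (1 + |b|) := by gcongr
    _ < δ := (lt_div_iff₀ (by positivity)).mp hγδ
  have key : trigamma (γ * z) - c * trigamma (γ * (1 + z))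
      - (1 / γ ^ 2) * (1 / z ^ 2 - c / (1 + z) ^ 2) - (1 - c) * π ^ 2 / 6
      = (trigamma (γ * z + 1) - π ^ 2 / 6) - c * (trigamma (γ * (1 + z) + 1) - π ^ 2 / 6) := by
    rw [trigamma_add_one (by positivity), trigamma_add_one (by positivity)]
    field_simp
    ring
  rw [key]
  calc _ ≤ |trigamma (γ * z + 1) - π ^ 2 / 6| + |c| * |trigamma (γ * (1 + z) + 1) - π ^ 2 / 6| := by
        rw [← abs_mul]; exact abs_sub _ _
    _ ≤ K * (γ * z) + |c| * (K * (γ * (1 + z))) := by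
        gcongr
        · exact hbound _ (by positivity) (by nlinarith)
        · exact hbound _ (by positivity) hsmall
    _ ≤ K * (γ * (1 + |b|)) + |c| * (K * (γ * (1 + |b|))) := by gcongr; linarith
    _ = K * (1 + |c|) * (1 + |b|) * γ := by ring

/-- Small-`γ` expansion of `ψ₁(γz̃) - c·ψ₁(γ(1 + z̃))`, uniformly for `z̃` in a compact
interval `[a, b] ⊆ (0, ∞)`:
`ψ₁(γz̃) - c·ψ₁(γ(1+z̃)) = γ⁻²(1/z̃² - c/(1+z̃)²) + (1-c)π²/6 + O(γ)`. -/
theorem trigamma_small_gamma_expansion (c a b : ℝ) (hc : 1 < c) (ha : 0 < a) (hab : a ≤ b) :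
    ∃ C > (0 : ℝ), ∃ γ₀ > (0 : ℝ), ∀ γ : ℝ, 0 < γ → γ < γ₀ →
      ∀ z ∈ Set.Icc a b,
        |trigamma (γ * z) - c * trigamma (γ * (1 + z))
            - (1 / γ ^ 2) * (1 / z ^ 2 - c / (1 + z) ^ 2)
            - (1 - c) * Real.pi ^ 2 / 6| ≤ C * γ :=
  trigamma_small_gamma_expansion_general c a b ha
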